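/- Assume the identifiability condition B2 and that Q_{1,t}(θ⁽¹⁾) and Q_{2,t}(θ⁽²⁾) are integrable for every θ ∈ Θ. Then the function θ ↦ E[ −Q_{1,t}(θ⁽¹⁾) − Q_{2,t}(θ⁽²⁾) ] attains its minimum over Θ at the unique point θ₀, i.e. Assumption C2 holds for the beta/double-Poisson quasi-likelihoods. [Proposition 3, C2 part] -/

import Mathlib

/-!
Both quasi-log-likelihoods have the canonical form `φ⁻¹ (Y ν - b ν)`, with `b = softplus` for the
beta part and `b = exp` for the Poisson part, and the true conditional mean of `Y` is `b' ν₀`.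
Since `ν` and `ν₀` are `𝓕_{t-1}`-measurable, conditioning on `𝓕_{t-1}` turns
`E[Q(θ₀) - Q(θ)]` into `φ⁻¹ E[b ν - b ν₀ - b' ν₀ (ν - ν₀)]`, the expected Bregman divergence of
the strictly convex `b`. It is positive unless `ν = ν₀` a.s., which by B2 forces `θ = θ₀`.
-/

open MeasureTheory Filter

noncomputable section

namespace MixTSQL

variable {Ω : Type*}

/-- `T₁(y) = log(y/(1−y))`. -/
def T1 (y : ℝ) : ℝ := Real.log (y / (1 - y))

/-- `T₂(y) = log(1+y)`. -/
def T2 (y : ℝ) : ℝ := Real.log (1 + y)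

/-- Regressor vector `(1, T₁(Y_{1,τ−1}),…,T₁(Y_{1,τ−r}), T₂(Y_{2,τ−1}),…,T₂(Y_{2,τ−s}))`
entering the linear predictor `ν_{1,τ}`. -/
def X1 (Y1 Y2 : ℤ → Ω → ℝ) (r s : ℕ) (τ : ℤ) (ω : Ω) : Fin (r + s + 1) → ℝ :=
  Fin.cons 1 (Fin.append (fun i : Fin r => T1 (Y1 (τ - 1 - (i.val : ℤ)) ω))
    (fun l : Fin s => T2 (Y2 (τ - 1 - (l.val : ℤ)) ω)))

/-- Regressor vector `(1, T₂(Y_{2,τ−1}),…,T₂(Y_{2,τ−p}), T₁(Y_{1,τ−1}),…,T₁(Y_{1,τ−k}))`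
entering the linear predictor `ν_{2,τ}`. -/
def X2 (Y1 Y2 : ℤ → Ω → ℝ) (p k : ℕ) (τ : ℤ) (ω : Ω) : Fin (p + k + 1) → ℝ :=
  Fin.cons 1 (Fin.append (fun i : Fin p => T2 (Y2 (τ - 1 - (i.val : ℤ)) ω))
    (fun l : Fin k => T1 (Y1 (τ - 1 - (l.val : ℤ)) ω)))

/-- Linear predictor `ν_{1,τ}(θ⁽¹⁾) = β₀⁽¹⁾ + Σ β_i⁽¹⁾ T₁(Y_{1,τ−i}) + Σ γ_l⁽¹⁾ T₂(Y_{2,τ−l})`. -/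
def nu1 (Y1 Y2 : ℤ → Ω → ℝ) (r s : ℕ) (θ1 : Fin (r + s + 1) → ℝ) (τ : ℤ) (ω : Ω) : ℝ :=
  ∑ j, θ1 j * X1 Y1 Y2 r s τ ω j

/-- Linear predictor `ν_{2,τ}(θ⁽²⁾) = β₀⁽²⁾ + Σ β_i⁽²⁾ T₂(Y_{2,τ−i}) + Σ γ_l⁽²⁾ T₁(Y_{1,τ−l})`. -/
def nu2 (Y1 Y2 : ℤ → Ω → ℝ) (p k : ℕ) (θ2 : Fin (p + k + 1) → ℝ) (τ : ℤ) (ω : Ω) : ℝ :=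
  ∑ j, θ2 j * X2 Y1 Y2 p k τ ω j

/-- Conditional mean `μ_{1,τ}(θ⁽¹⁾) = e^{ν_{1,τ}}/(1+e^{ν_{1,τ}})` (logit link). -/
def mu1 (Y1 Y2 : ℤ → Ω → ℝ) (r s : ℕ) (θ1 : Fin (r + s + 1) → ℝ) (τ : ℤ) (ω : Ω) : ℝ :=
  Real.exp (nu1 Y1 Y2 r s θ1 τ ω) / (1 + Real.exp (nu1 Y1 Y2 r s θ1 τ ω))

/-- Conditional mean `μ_{2,τ}(θ⁽²⁾) = e^{ν_{2,τ}}` (log link). -/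
def mu2 (Y1 Y2 : ℤ → Ω → ℝ) (p k : ℕ) (θ2 : Fin (p + k + 1) → ℝ) (τ : ℤ) (ω : Ω) : ℝ :=
  Real.exp (nu2 Y1 Y2 p k θ2 τ ω)

/-- Beta-type quasi-log-likelihood summand
`Q_{1,τ}(θ⁽¹⁾) = φ₁⁻¹ [Y_{1,τ} log μ_{1,τ} + (1−Y_{1,τ}) log(1−μ_{1,τ})]`. -/
def Q1 (Y1 Y2 : ℤ → Ω → ℝ) (r s : ℕ) (φ1 : ℝ) (θ1 : Fin (r + s + 1) → ℝ) (τ : ℤ) (ω : Ω) : ℝ :=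
  φ1⁻¹ * (Y1 τ ω * Real.log (mu1 Y1 Y2 r s θ1 τ ω)
    + (1 - Y1 τ ω) * Real.log (1 - mu1 Y1 Y2 r s θ1 τ ω))

/-- Double-Poisson-type quasi-log-likelihood summand
`Q_{2,τ}(θ⁽²⁾) = φ₂⁻¹ [Y_{2,τ} log μ_{2,τ} − μ_{2,τ}]`. -/
def Q2 (Y1 Y2 : ℤ → Ω → ℝ) (p k : ℕ) (φ2 : ℝ) (θ2 : Fin (p + k + 1) → ℝ) (τ : ℤ) (ω : Ω) : ℝ :=
  φ2⁻¹ * (Y2 τ ω * Real.log (mu2 Y1 Y2 p k θ2 τ ω) - mu2 Y1 Y2 p k θ2 τ ω)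

/-- The past σ-algebra `𝓕_{t−1} = σ((Y_{1,s},Y_{2,s}) : s ≤ t−1)`. -/
def Fpast [MeasurableSpace Ω] (Y1 Y2 : ℤ → Ω → ℝ) (t : ℤ) : MeasurableSpace Ω :=
  ⨆ s : {s : ℤ // s ≤ t - 1},
    MeasurableSpace.comap (Y1 s) (inferInstance : MeasurableSpace ℝ)
      ⊔ MeasurableSpace.comap (Y2 s) (inferInstance : MeasurableSpace ℝ)

open Real

def bregman (b b' : ℝ → ℝ) (x₀ x : ℝ) : ℝ := b x - b x₀ - b' x₀ * (x - x₀)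

lemma bregman_exp_pos {x₀ x : ℝ} (h : x ≠ x₀) : 0 < bregman exp exp x₀ x := by
  have key : x - x₀ + 1 < exp (x - x₀) := add_one_lt_exp (sub_ne_zero.mpr h)
  have hsplit : exp x = exp x₀ * exp (x - x₀) := by rw [← exp_add, add_sub_cancel]
  unfold bregman
  rw [hsplit]
  nlinarith [exp_pos x₀]

def logistic (x : ℝ) : ℝ := exp x / (1 + exp x)

def softplus (x : ℝ) : ℝ := log (1 + exp x)

lemma logistic_pos (x : ℝ) : 0 < logistic x := div_pos (exp_pos x) (by positivity)

lemma measurable_softplus : Measurable softplus := by unfold softplus; fun_prop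

lemma log_logistic (x : ℝ) : log (logistic x) = x - softplus x := by
  rw [logistic, softplus, log_div (exp_pos x).ne' (by positivity), log_exp]

lemma log_one_sub_logistic (x : ℝ) : log (1 - logistic x) = -softplus x := by
  have h : 1 - logistic x = (1 + exp x)⁻¹ := by
    rw [logistic]
    field_simp
    ring
  rw [h, log_inv, softplus]

lemma bregman_softplus_pos {x₀ x : ℝ} (h : x ≠ x₀) :
    0 < bregman softplus logistic x₀ x := by
  set p := logistic x₀
  have hp : 0 < p := logistic_pos x₀
  have hp1 : p < 1 := (div_lt_one (by positivity)).2 (by linarith)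
  have hu : exp (x - x₀) ≠ 1 := by
    rw [Ne, exp_eq_one_iff, sub_eq_zero]; exact h
  -- strict concavity of `log` between `1` and `e^{x - x₀}` with weights `1 - p` and `p`
  have hconc := strictConcaveOn_log_Ioi.2 (Set.mem_Ioi.2 one_pos)
    (Set.mem_Ioi.2 (exp_pos (x - x₀))) hu.symm (sub_pos.2 hp1) hp (by ring)
  have hmix : (1 - p) • (1 : ℝ) + p • exp (x - x₀) = (1 + exp x) / (1 + exp x₀) := by
    simp only [smul_eq_mul, p, logistic, exp_sub]
    field_simp
    ring
  rw [hmix, smul_eq_mul, smul_eq_mul, log_one, log_exp,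
    log_div (by positivity) (by positivity)] at hconc
  unfold bregman softplus
  linarith

lemma condExp_mul_sub_of_stronglyMeasurable {m mΩ : MeasurableSpace Ω} (hm : m ≤ mΩ)
    {P : Measure Ω} [IsFiniteMeasure P] {Z d c : Ω → ℝ} (hZ : Integrable Z P)
    (hd : StronglyMeasurable[m] d) (hc : StronglyMeasurable[m] c)
    (hZdc : Integrable (fun ω => Z ω * d ω - c ω) P) :
    P[fun ω => Z ω * d ω - c ω|m] =ᵐ[P] fun ω => d ω * P[Z|m] ω - c ω := by
  -- `d` and `c` need not be bounded, so localise to the `m`-measurable sets where they are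
  set A : ℕ → Set Ω := fun n => {ω | ‖d ω‖ ≤ n ∧ ‖c ω‖ ≤ n}
  have hA : ∀ n, MeasurableSet[m] (A n) := fun n =>
    (measurableSet_le (mδ := m) hd.norm.measurable measurable_const).inter
      (measurableSet_le (mδ := m) hc.norm.measurable measurable_const)
  have hA_cover : ⋃ n, A n = Set.univ := by
    refine Set.eq_univ_of_forall fun ω => Set.mem_iUnion.2 ?_
    obtain ⟨n, hn⟩ := exists_nat_ge (max ‖d ω‖ ‖c ω‖)
    exact ⟨n, (le_max_left _ _).trans hn, (le_max_right _ _).trans hn⟩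
  suffices h : ∀ n, ∀ᵐ ω ∂P.restrict (A n), P[fun ω => Z ω * d ω - c ω|m] ω
      = d ω * P[Z|m] ω - c ω by
    have hP := (ae_restrict_iUnion_iff A _).2 h
    rwa [hA_cover, Measure.restrict_univ] at hP
  intro n
  set Q := P.restrict (A n)
  have hQd : ∀ᵐ ω ∂Q, ‖d ω‖ ≤ n := (ae_restrict_mem (hm _ (hA n))).mono fun ω h => h.1
  have hQc : Integrable c Q :=
    (integrable_const (n : ℝ)).mono' (hc.mono hm).aestronglyMeasurable
      ((ae_restrict_mem (hm _ (hA n))).mono fun ω h => h.2)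
  have hQdZ : Integrable (d * Z) Q :=
    hZ.restrict.bdd_mul (hd.mono hm).aestronglyMeasurable hQd
  have hcondQ : Q[fun ω => Z ω * d ω - c ω|m] =ᵐ[Q] fun ω => d ω * Q[Z|m] ω - c ω := by
    have hsplit : (fun ω => Z ω * d ω - c ω) = d * Z - c := by ext ω; simp [mul_comm]
    rw [hsplit]
    filter_upwards [condExp_sub hQdZ hQc m,
      condExp_mul_of_stronglyMeasurable_left hd hQdZ hZ.restrict] with ω h1 h2
    rw [h1, Pi.sub_apply, h2, condExp_of_stronglyMeasurable hm hc hQc]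
    rfl
  filter_upwards [(condExp_restrict_ae_eq_restrict hm (hA n) hZdc).symm, hcondQ,
    condExp_restrict_ae_eq_restrict hm (hA n) hZ] with ω h1 h2 h3
  rw [h1, h2, h3]

section QuasiLikelihood

variable {m mΩ : MeasurableSpace Ω} {P : Measure Ω}

lemma integrable_of_ae_condExp_pos [NeZero P] {Z : Ω → ℝ} (h : ∀ᵐ ω ∂P, 0 < P[Z|m] ω) :
    Integrable Z P := by
  by_contra hZ
  rw [condExp_of_not_integrable hZ] at h
  simpa using h.exists

variable [IsFiniteMeasure P] {b b' : ℝ → ℝ} {Z ν ν₀ : Ω → ℝ}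

lemma integral_sub_eq_integral_bregman (hm : m ≤ mΩ) (hb : Measurable b)
    (hZ : Integrable Z P) (hν : StronglyMeasurable[m] ν) (hν₀ : StronglyMeasurable[m] ν₀)
    (hint : Integrable (fun ω => Z ω * ν ω - b (ν ω)) P)
    (hint₀ : Integrable (fun ω => Z ω * ν₀ ω - b (ν₀ ω)) P)
    (hcond : P[Z|m] =ᵐ[P] fun ω => b' (ν₀ ω)) :
    Integrable (fun ω => bregman b b' (ν₀ ω) (ν ω)) P ∧
      ∫ ω, (Z ω * ν₀ ω - b (ν₀ ω)) ∂P - ∫ ω, (Z ω * ν ω - b (ν ω)) ∂P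
        = ∫ ω, bregman b b' (ν₀ ω) (ν ω) ∂P := by
  have hdiff : (fun ω => Z ω * (ν₀ ω - ν ω) - (b (ν₀ ω) - b (ν ω)))
      = fun ω => (Z ω * ν₀ ω - b (ν₀ ω)) - (Z ω * ν ω - b (ν ω)) := by
    ext ω; ring
  have hcb := hb.stronglyMeasurable
  have hpull := condExp_mul_sub_of_stronglyMeasurable (d := fun ω => ν₀ ω - ν ω)
    (c := fun ω => b (ν₀ ω) - b (ν ω)) hm hZ (hν₀.sub hν)
    ((hcb.comp_measurable hν₀.measurable).sub (hcb.comp_measurable hν.measurable))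
    (hdiff ▸ hint₀.sub hint)
  have hcondExp : P[fun ω => Z ω * (ν₀ ω - ν ω) - (b (ν₀ ω) - b (ν ω))|m]
      =ᵐ[P] fun ω => bregman b b' (ν₀ ω) (ν ω) := by
    filter_upwards [hpull, hcond] with ω h1 h2
    rw [h1, h2, bregman]
    ring
  refine ⟨integrable_condExp.congr hcondExp, ?_⟩
  rw [← integral_sub hint₀ hint, ← hdiff, ← integral_condExp hm, integral_congr_ae hcondExp]

lemma integral_lt_of_condExp_eq (hm : m ≤ mΩ) (hb : Measurable b)
    (hbregman : ∀ x₀ x, x ≠ x₀ → 0 < bregman b b' x₀ x)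
    (hZ : Integrable Z P) (hν : StronglyMeasurable[m] ν) (hν₀ : StronglyMeasurable[m] ν₀)
    (hint : Integrable (fun ω => Z ω * ν ω - b (ν ω)) P)
    (hint₀ : Integrable (fun ω => Z ω * ν₀ ω - b (ν₀ ω)) P)
    (hcond : P[Z|m] =ᵐ[P] fun ω => b' (ν₀ ω)) (hne : ¬ ν =ᵐ[P] ν₀) :
    ∫ ω, (Z ω * ν ω - b (ν ω)) ∂P < ∫ ω, (Z ω * ν₀ ω - b (ν₀ ω)) ∂P := by
  obtain ⟨hint_bregman, hgap⟩ :=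
    integral_sub_eq_integral_bregman hm hb hZ hν hν₀ hint hint₀ hcond
  have hnonneg : 0 ≤ fun ω => bregman b b' (ν₀ ω) (ν ω) := fun ω => by
    rcases eq_or_ne (ν ω) (ν₀ ω) with h | h
    · simp [bregman, h]
    · exact (hbregman _ _ h).le
  have hpos : 0 < ∫ ω, bregman b b' (ν₀ ω) (ν ω) ∂P := by
    refine (integral_nonneg hnonneg).lt_of_ne fun h0 => hne ?_
    filter_upwards [(integral_eq_zero_iff_of_nonneg hnonneg hint_bregman).1 h0.symm] with ω hω
    by_contra h
    exact (hbregman _ _ h).ne' hω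
  linarith

end QuasiLikelihood

lemma measurable_finCons_one_append {m : MeasurableSpace Ω} {r s : ℕ} {f : Fin r → Ω → ℝ}
    {g : Fin s → Ω → ℝ} (hf : ∀ i, Measurable (f i)) (hg : ∀ l, Measurable (g l)) :
    Measurable fun ω =>
      (Fin.cons 1 (Fin.append (fun i => f i ω) (fun l => g l ω)) : Fin (r + s + 1) → ℝ) := by
  refine measurable_pi_iff.2 fun j => Fin.cases ?_ (fun i => ?_) j
  · simp
  · refine Fin.addCases (fun i => ?_) (fun l => ?_) i
    · simpa using hf i
    · simpa using hg l

section Past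

variable {mΩ : MeasurableSpace Ω} (Y1 Y2 : ℤ → Ω → ℝ) {t : ℤ}

lemma Fpast_le (hY1 : ∀ τ, Measurable (Y1 τ)) (hY2 : ∀ τ, Measurable (Y2 τ)) :
    Fpast Y1 Y2 t ≤ mΩ :=
  iSup_le fun τ => sup_le (hY1 τ).comap_le (hY2 τ).comap_le

lemma comap_le_Fpast {τ : ℤ} (hτ : τ ≤ t - 1) :
    MeasurableSpace.comap (Y1 τ) inferInstance ⊔ MeasurableSpace.comap (Y2 τ) inferInstance
      ≤ Fpast Y1 Y2 t :=
  le_iSup (fun τ : {τ : ℤ // τ ≤ t - 1} =>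
    MeasurableSpace.comap (Y1 τ) (inferInstance : MeasurableSpace ℝ)
      ⊔ MeasurableSpace.comap (Y2 τ) (inferInstance : MeasurableSpace ℝ)) ⟨τ, hτ⟩

lemma measurable_fst_Fpast {τ : ℤ} (hτ : τ ≤ t - 1) : Measurable[Fpast Y1 Y2 t] (Y1 τ) :=
  measurable_iff_comap_le.2 (le_sup_left.trans (comap_le_Fpast Y1 Y2 hτ))

lemma measurable_snd_Fpast {τ : ℤ} (hτ : τ ≤ t - 1) : Measurable[Fpast Y1 Y2 t] (Y2 τ) :=
  measurable_iff_comap_le.2 (le_sup_right.trans (comap_le_Fpast Y1 Y2 hτ))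

lemma measurable_T1 : Measurable T1 := by unfold T1; fun_prop

lemma measurable_T2 : Measurable T2 := by unfold T2; fun_prop

lemma measurable_nu1_Fpast (r s : ℕ) (θ1 : Fin (r + s + 1) → ℝ) :
    Measurable[Fpast Y1 Y2 t] (nu1 Y1 Y2 r s θ1 t) := by
  have hX : Measurable[Fpast Y1 Y2 t] (X1 Y1 Y2 r s t) :=
    measurable_finCons_one_append
      (fun i => measurable_T1.comp (measurable_fst_Fpast Y1 Y2 (by omega)))
      (fun l => measurable_T2.comp (measurable_snd_Fpast Y1 Y2 (by omega)))
  exact Finset.measurable_sum _ fun j _ => ((measurable_pi_apply j).comp hX).const_mul (θ1 j)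

lemma measurable_nu2_Fpast (p k : ℕ) (θ2 : Fin (p + k + 1) → ℝ) :
    Measurable[Fpast Y1 Y2 t] (nu2 Y1 Y2 p k θ2 t) := by
  have hX : Measurable[Fpast Y1 Y2 t] (X2 Y1 Y2 p k t) :=
    measurable_finCons_one_append
      (fun i => measurable_T2.comp (measurable_snd_Fpast Y1 Y2 (by omega)))
      (fun l => measurable_T1.comp (measurable_fst_Fpast Y1 Y2 (by omega)))
  exact Finset.measurable_sum _ fun j _ => ((measurable_pi_apply j).comp hX).const_mul (θ2 j)

end Past

section Model

variable {mΩ : MeasurableSpace Ω} {P : Measure Ω} [IsProbabilityMeasure P] {Y1 Y2 : ℤ → Ω → ℝ}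
  {t : ℤ}

lemma Q1_eq (r s : ℕ) (φ1 : ℝ) (θ1 : Fin (r + s + 1) → ℝ) :
    Q1 Y1 Y2 r s φ1 θ1 t =
      fun ω => φ1⁻¹ * (Y1 t ω * nu1 Y1 Y2 r s θ1 t ω - softplus (nu1 Y1 Y2 r s θ1 t ω)) := by
  ext ω
  simp only [Q1, mu1]
  rw [← logistic, log_logistic, log_one_sub_logistic]
  ring

lemma Q2_eq (p k : ℕ) (φ2 : ℝ) (θ2 : Fin (p + k + 1) → ℝ) :
    Q2 Y1 Y2 p k φ2 θ2 t =
      fun ω => φ2⁻¹ * (Y2 t ω * nu2 Y1 Y2 p k θ2 t ω - exp (nu2 Y1 Y2 p k θ2 t ω)) := by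
  ext ω
  rw [Q2, mu2, log_exp]

lemma integral_Q1_lt (hm : Fpast Y1 Y2 t ≤ mΩ) {r s : ℕ} {φ1 : ℝ} (hφ1 : 0 < φ1)
    {θ1 θ01 : Fin (r + s + 1) → ℝ}
    (htrue1 : P[Y1 t|Fpast Y1 Y2 t] =ᵐ[P] fun ω => mu1 Y1 Y2 r s θ01 t ω)
    (hint : Integrable (Q1 Y1 Y2 r s φ1 θ1 t) P) (hint₀ : Integrable (Q1 Y1 Y2 r s φ1 θ01 t) P)
    (hne : ¬ nu1 Y1 Y2 r s θ1 t =ᵐ[P] nu1 Y1 Y2 r s θ01 t) :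
    ∫ ω, Q1 Y1 Y2 r s φ1 θ1 t ω ∂P < ∫ ω, Q1 Y1 Y2 r s φ1 θ01 t ω ∂P := by
  have hY : Integrable (Y1 t) P :=
    integrable_of_ae_condExp_pos (htrue1.mono fun ω h => by rw [h]; exact logistic_pos _)
  have hunit : IsUnit φ1⁻¹ := (inv_pos.2 hφ1).ne'.isUnit
  rw [Q1_eq, integrable_const_mul_iff hunit] at hint hint₀
  rw [Q1_eq, Q1_eq, integral_const_mul, integral_const_mul]
  exact mul_lt_mul_of_pos_left
    (integral_lt_of_condExp_eq hm measurable_softplus (fun _ _ => bregman_softplus_pos) hY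
      (measurable_nu1_Fpast Y1 Y2 r s θ1).stronglyMeasurable
      (measurable_nu1_Fpast Y1 Y2 r s θ01).stronglyMeasurable hint hint₀ htrue1 hne)
    (inv_pos.2 hφ1)

lemma integral_Q2_lt (hm : Fpast Y1 Y2 t ≤ mΩ) {p k : ℕ} {φ2 : ℝ} (hφ2 : 0 < φ2)
    {θ2 θ02 : Fin (p + k + 1) → ℝ}
    (htrue2 : P[Y2 t|Fpast Y1 Y2 t] =ᵐ[P] fun ω => mu2 Y1 Y2 p k θ02 t ω)
    (hint : Integrable (Q2 Y1 Y2 p k φ2 θ2 t) P) (hint₀ : Integrable (Q2 Y1 Y2 p k φ2 θ02 t) P)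
    (hne : ¬ nu2 Y1 Y2 p k θ2 t =ᵐ[P] nu2 Y1 Y2 p k θ02 t) :
    ∫ ω, Q2 Y1 Y2 p k φ2 θ2 t ω ∂P < ∫ ω, Q2 Y1 Y2 p k φ2 θ02 t ω ∂P := by
  have hY : Integrable (Y2 t) P :=
    integrable_of_ae_condExp_pos (htrue2.mono fun ω h => by rw [h]; exact exp_pos _)
  have hunit : IsUnit φ2⁻¹ := (inv_pos.2 hφ2).ne'.isUnit
  rw [Q2_eq, integrable_const_mul_iff hunit] at hint hint₀
  rw [Q2_eq, Q2_eq, integral_const_mul, integral_const_mul]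
  exact mul_lt_mul_of_pos_left
    (integral_lt_of_condExp_eq hm measurable_exp (fun _ _ => bregman_exp_pos) hY
      (measurable_nu2_Fpast Y1 Y2 p k θ2).stronglyMeasurable
      (measurable_nu2_Fpast Y1 Y2 p k θ02).stronglyMeasurable hint hint₀ htrue2 hne)
    (inv_pos.2 hφ2)

end Model

theorem assumptionC2_holds_general
    {mΩ : MeasurableSpace Ω} (P : Measure Ω) [IsProbabilityMeasure P]
    (Y1 Y2 : ℤ → Ω → ℝ)
    (hY1meas : ∀ τ, Measurable (Y1 τ)) (hY2meas : ∀ τ, Measurable (Y2 τ))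
    (r s p k : ℕ) (φ1 φ2 : ℝ) (hφ1 : 0 < φ1) (hφ2 : 0 < φ2)
    (Θ1 : Set (Fin (r + s + 1) → ℝ)) (Θ2 : Set (Fin (p + k + 1) → ℝ))
    (t : ℤ)
    -- the true parameter θ₀ = (θ₀⁽¹⁾, θ₀⁽²⁾) ∈ Θ and its conditional-mean property
    (θ01 : Fin (r + s + 1) → ℝ) (θ02 : Fin (p + k + 1) → ℝ)
    (hθ0mem : (θ01, θ02) ∈ Θ1 ×ˢ Θ2)
    (htrue1 : P[Y1 t|Fpast Y1 Y2 t] =ᵐ[P] fun ω => mu1 Y1 Y2 r s θ01 t ω)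
    (htrue2 : P[Y2 t|Fpast Y1 Y2 t] =ᵐ[P] fun ω => mu2 Y1 Y2 p k θ02 t ω)
    -- Assumption B2 (identifiability)
    (hB2a : ∀ θ1 : Fin (r + s + 1) → ℝ,
      ((fun ω => nu1 Y1 Y2 r s θ1 t ω) =ᵐ[P] fun ω => nu1 Y1 Y2 r s θ01 t ω) ↔ θ1 = θ01)
    (hB2b : ∀ θ2 : Fin (p + k + 1) → ℝ,
      ((fun ω => nu2 Y1 Y2 p k θ2 t ω) =ᵐ[P] fun ω => nu2 Y1 Y2 p k θ02 t ω) ↔ θ2 = θ02)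
    -- integrability of the quasi-log-likelihood summands for every θ ∈ Θ
    (hint1 : ∀ θ1 ∈ Θ1, Integrable (fun ω => Q1 Y1 Y2 r s φ1 θ1 t ω) P)
    (hint2 : ∀ θ2 ∈ Θ2, Integrable (fun ω => Q2 Y1 Y2 p k φ2 θ2 t ω) P) :
    ∀ θ ∈ Θ1 ×ˢ Θ2, θ ≠ (θ01, θ02) →
      ∫ ω, (-Q1 Y1 Y2 r s φ1 θ01 t ω - Q2 Y1 Y2 p k φ2 θ02 t ω) ∂P <
        ∫ ω, (-Q1 Y1 Y2 r s φ1 θ.1 t ω - Q2 Y1 Y2 p k φ2 θ.2 t ω) ∂P := by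
  rintro ⟨θ1, θ2⟩ ⟨hθ1, hθ2⟩ hne
  have hm := Fpast_le Y1 Y2 (t := t) hY1meas hY2meas
  have hQ1 : θ1 = θ01 ∨ ∫ ω, Q1 Y1 Y2 r s φ1 θ1 t ω ∂P < ∫ ω, Q1 Y1 Y2 r s φ1 θ01 t ω ∂P :=
    (eq_or_ne θ1 θ01).imp_right fun h => integral_Q1_lt hm hφ1 htrue1 (hint1 θ1 hθ1)
      (hint1 θ01 hθ0mem.1) (mt (hB2a θ1).1 h)
  have hQ2 : θ2 = θ02 ∨ ∫ ω, Q2 Y1 Y2 p k φ2 θ2 t ω ∂P < ∫ ω, Q2 Y1 Y2 p k φ2 θ02 t ω ∂P :=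
    (eq_or_ne θ2 θ02).imp_right fun h => integral_Q2_lt hm hφ2 htrue2 (hint2 θ2 hθ2)
      (hint2 θ02 hθ0mem.2) (mt (hB2b θ2).1 h)
  rw [integral_sub (hint1 θ01 hθ0mem.1).fun_neg (hint2 θ02 hθ0mem.2),
    integral_sub (hint1 θ1 hθ1).fun_neg (hint2 θ2 hθ2), integral_neg, integral_neg]
  rcases hQ1 with rfl | hQ1 <;> rcases hQ2 with rfl | hQ2
  · exact absurd rfl hne
  all_goals linarith

/-- **Proposition 3 (C2 part).** Under the identifiability Assumption B2 and integrability of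
`Q_{1,t}(θ⁽¹⁾)` and `Q_{2,t}(θ⁽²⁾)` for every `θ ∈ Θ`, the function
`θ ↦ E[−Q_{1,t}(θ⁽¹⁾) − Q_{2,t}(θ⁽²⁾)]` attains its minimum over `Θ = Θ₁ × Θ₂` at the
unique point `θ₀`, i.e. Assumption C2 holds for the beta/double-Poisson quasi-likelihoods. -/
theorem assumptionC2_holds
    {mΩ : MeasurableSpace Ω} (P : Measure Ω) [IsProbabilityMeasure P]
    (Y1 Y2 : ℤ → Ω → ℝ)
    (hY1meas : ∀ τ, Measurable (Y1 τ)) (hY2meas : ∀ τ, Measurable (Y2 τ))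
    (hY1mem : ∀ τ ω, Y1 τ ω ∈ Set.Ioo (0 : ℝ) 1) (hY2nonneg : ∀ τ ω, 0 ≤ Y2 τ ω)
    (r s p k : ℕ) (φ1 φ2 : ℝ) (hφ1 : 0 < φ1) (hφ2 : 0 < φ2)
    (Θ1 : Set (Fin (r + s + 1) → ℝ)) (Θ2 : Set (Fin (p + k + 1) → ℝ))
    (t : ℤ)
    -- the true parameter θ₀ = (θ₀⁽¹⁾, θ₀⁽²⁾) ∈ Θ and its conditional-mean property
    (θ01 : Fin (r + s + 1) → ℝ) (θ02 : Fin (p + k + 1) → ℝ)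
    (hθ0mem : (θ01, θ02) ∈ Θ1 ×ˢ Θ2)
    (htrue1 : P[Y1 t|Fpast Y1 Y2 t] =ᵐ[P] fun ω => mu1 Y1 Y2 r s θ01 t ω)
    (htrue2 : P[Y2 t|Fpast Y1 Y2 t] =ᵐ[P] fun ω => mu2 Y1 Y2 p k θ02 t ω)
    -- Assumption B2 (identifiability)
    (hB2a : ∀ θ1 : Fin (r + s + 1) → ℝ,
      ((fun ω => nu1 Y1 Y2 r s θ1 t ω) =ᵐ[P] fun ω => nu1 Y1 Y2 r s θ01 t ω) ↔ θ1 = θ01)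
    (hB2b : ∀ θ2 : Fin (p + k + 1) → ℝ,
      ((fun ω => nu2 Y1 Y2 p k θ2 t ω) =ᵐ[P] fun ω => nu2 Y1 Y2 p k θ02 t ω) ↔ θ2 = θ02)
    -- integrability of the quasi-log-likelihood summands for every θ ∈ Θ
    (hint1 : ∀ θ1 ∈ Θ1, Integrable (fun ω => Q1 Y1 Y2 r s φ1 θ1 t ω) P)
    (hint2 : ∀ θ2 ∈ Θ2, Integrable (fun ω => Q2 Y1 Y2 p k φ2 θ2 t ω) P) :
    ∀ θ ∈ Θ1 ×ˢ Θ2, θ ≠ (θ01, θ02) →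
      ∫ ω, (-Q1 Y1 Y2 r s φ1 θ01 t ω - Q2 Y1 Y2 p k φ2 θ02 t ω) ∂P <
        ∫ ω, (-Q1 Y1 Y2 r s φ1 θ.1 t ω - Q2 Y1 Y2 p k φ2 θ.2 t ω) ∂P :=
  assumptionC2_holds_general (mΩ := mΩ) P Y1 Y2 hY1meas hY2meas r s p k φ1 φ2 hφ1 hφ2 Θ1 Θ2 t θ01
    θ02 hθ0mem htrue1 htrue2 hB2a hB2b hint1 hint2

end MixTSQL
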